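/- Suppose τ̃ dominates τ (i.e. τ(α) ≤ τ(β) implies τ̃(α) ≤ τ̃(β) for all α, β ∈ C). Let λ : {1,…,m} → C and α = λ({1,…,m}). Then S({1,…,m},≤,λ,τ̃,τ) = (−1)^{m−1} if τ(λ({1,…,i})) > τ(λ({i+1,…,m})) for all i = 1,…,m−1 and τ̃(λ(i)) = τ̃(α) for all i = 1,…,m, and S({1,…,m},≤,λ,τ̃,τ) = 0 otherwise. -/

import Mathlib

open scoped Classical
open Finset Function

/-- A weak stability function on `C ⊆ A` with values in a total order:
whenever `α, γ ∈ C` (so that `β = α + γ`), either `τ α ≤ τ β ≤ τ γ` or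
`τ α ≥ τ β ≥ τ γ`. -/
def WeakStability {A T : Type*} [AddCommGroup A] [LinearOrder T] (C : Set A) (τ : A → T) : Prop :=
  ∀ α γ : A, α ∈ C → γ ∈ C →
    (τ α ≤ τ (α + γ) ∧ τ (α + γ) ≤ τ γ) ∨ (τ γ ≤ τ (α + γ) ∧ τ (α + γ) ≤ τ α)

/-- Sum `κ 0 + ⋯ + κ i`. -/
def lowSum {A : Type*} [AddCommGroup A] (κ : ℕ → A) (i : ℕ) : A :=
  ∑ j ∈ Finset.range (i + 1), κ j

/-- Sum `κ (i+1) + ⋯ + κ (n-1)`. -/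
def highSum {A : Type*} [AddCommGroup A] (κ : ℕ → A) (i n : ℕ) : A :=
  ∑ j ∈ Finset.Ico (i + 1) n, κ j

/-- Condition (a) at position `i` in the definition of the coefficient `S`. -/
def SCondA {A T T' : Type*} [AddCommGroup A] [LinearOrder T] [LinearOrder T']
    (τ : A → T) (τ' : A → T') (n : ℕ) (κ : ℕ → A) (i : ℕ) : Prop :=
  τ (κ i) ≤ τ (κ (i + 1)) ∧ τ' (highSum κ i n) < τ' (lowSum κ i)

/-- Condition (b) at position `i` in the definition of the coefficient `S`. -/
def SCondB {A T T' : Type*} [AddCommGroup A] [LinearOrder T] [LinearOrder T']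
    (τ : A → T) (τ' : A → T') (n : ℕ) (κ : ℕ → A) (i : ℕ) : Prop :=
  τ (κ (i + 1)) < τ (κ i) ∧ τ' (lowSum κ i) ≤ τ' (highSum κ i n)

/-- The transformation coefficient `S({1,…,n},≤,κ,τ,τ')` for the sequence
`κ 0, …, κ (n-1)` (indexed from `0`). -/
noncomputable def Scoeff {A T T' : Type*} [AddCommGroup A] [LinearOrder T] [LinearOrder T']
    (τ : A → T) (τ' : A → T') (n : ℕ) (κ : ℕ → A) : ℤ :=
  if ∀ i ∈ Finset.range (n - 1), SCondA τ τ' n κ i ∨ SCondB τ τ' n κ i then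
    (-1) ^ ((Finset.range (n - 1)).filter (SCondA τ τ' n κ)).card
  else 0

/-- The sequence `κ 0, …, κ (n-1)` is `τ`-reversing. -/
def Reversing {A T : Type*} [AddCommGroup A] [LinearOrder T] (τ : A → T) (n : ℕ) (κ : ℕ → A) :
    Prop :=
  ∀ i, i + 1 < n → τ (κ (i + 1)) < τ (κ i)

/-- The sequence `κ 0, …, κ (n-1)` is `τ`-semistable. -/
def Semistable {A T : Type*} [AddCommGroup A] [LinearOrder T] (τ : A → T) (n : ℕ) (κ : ℕ → A) :
    Prop :=
  ∀ i, i + 1 < n → τ (lowSum κ i) ≤ τ (highSum κ i n)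

/-- Extend a `Fin n`-indexed sequence to `ℕ` by zero. -/
def toSeq {A : Type*} [AddCommGroup A] {n : ℕ} (κ : Fin n → A) : ℕ → A :=
  fun j => if h : j < n then κ ⟨j, h⟩ else 0

/-- The subsequence of `κ` on a subset `s ⊆ Fin n`, enumerated in increasing order. -/
noncomputable def fiberSeq {A : Type*} [AddCommGroup A] {n : ℕ} (κ : Fin n → A)
    (s : Finset (Fin n)) : ℕ → A :=
  fun j => if h : j < s.card then κ (s.orderIsoOfFin rfl ⟨j, h⟩).1 else 0

/-- The transformation coefficient `U({1,…,n},≤,κ,τ,τ')`. -/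
noncomputable def Ucoeff {A T T' : Type*} [AddCommGroup A] [LinearOrder T] [LinearOrder T']
    (τ : A → T) (τ' : A → T') (n : ℕ) (κ : ℕ → A) : ℚ :=
  ∑ l ∈ Finset.Icc 1 n, ∑ m ∈ Finset.Icc l n,
    ∑ p ∈ Finset.univ.filter
        (fun p : (Fin n → Fin m) × (Fin m → Fin l) =>
          Surjective p.1 ∧ Monotone p.1 ∧ Surjective p.2 ∧ Monotone p.2),
      (if (∀ i : Fin n, τ (κ i.1) =
              τ (∑ j ∈ Finset.univ.filter (fun j : Fin n => p.1 j = p.1 i), κ j.1)) ∧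
          (∀ a : Fin l,
              τ' (∑ j ∈ Finset.univ.filter (fun j : Fin n => p.2 (p.1 j) = a), κ j.1) =
              τ' (∑ j ∈ Finset.range n, κ j)) then
        (∏ a : Fin l,
          ((Scoeff τ τ' (Finset.univ.filter (fun b : Fin m => p.2 b = a)).card
            (fiberSeq
              (fun b : Fin m => ∑ j ∈ Finset.univ.filter (fun j : Fin n => p.1 j = b), κ j.1)
              (Finset.univ.filter (fun b : Fin m => p.2 b = a)))) : ℚ))
        * ((-1 : ℚ) ^ (l - 1) / (l : ℚ))
        * ∏ b : Fin m,
            ((1 : ℚ) / (Nat.factorial (Finset.univ.filter (fun j : Fin n => p.1 j = b)).card : ℚ))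
      else 0)

/-
If every index is of type (a) or (b), none is of type (b). Suppose `i` is: then
`τ̃(λ(i+1)) < τ̃(λ(i))`, so `τ̃(λ(i)) > τ̃(α)` or `τ̃(λ(i+1)) < τ̃(α)`. In the first case domination
gives `τ(λ(i)) > τ(α)`, and the seesaw inequality for `τ` then rules out type (a) at `i - 1`; so
`i - 1` is of type (b) with `τ̃(λ(i-1)) > τ̃(λ(i)) > τ̃(α)`. Descending to `0` contradicts
`τ̃(λ(0)) ≤ τ̃(α)`, which type (b) at `0` gives through domination and the seesaw inequality for
`τ̃`. The second case is symmetric, ascending to `m - 2`. Once all indices are of type (a),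
`τ̃ ∘ λ` is nondecreasing, while type (a) at the two ends gives `τ̃(λ(0)) ≥ τ̃(α) ≥ τ̃(λ(m-1))`.
-/

/-- `Dominates C τ τt`: `τt` dominates `τ` on `C`. -/
def Dominates {A T T' : Type*} [AddCommGroup A] [LinearOrder T] [LinearOrder T'] (C : Set A)
    (τ : A → T) (τt : A → T') : Prop :=
  ∀ α β : A, α ∈ C → β ∈ C → τ α ≤ τ β → τt α ≤ τt β

namespace WeakStability

variable {A T : Type*} [AddCommGroup A] [LinearOrder T] {C : Set A} {τ : A → T} {a b : A}

theorem min_le_apply_add (hτ : WeakStability C τ) (ha : a ∈ C) (hb : b ∈ C) :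
    min (τ a) (τ b) ≤ τ (a + b) := by
  rcases hτ a b ha hb with ⟨h, -⟩ | ⟨h, -⟩
  · exact min_le_of_left_le h
  · exact min_le_of_right_le h

theorem apply_add_le_max (hτ : WeakStability C τ) (ha : a ∈ C) (hb : b ∈ C) :
    τ (a + b) ≤ max (τ a) (τ b) := by
  rcases hτ a b ha hb with ⟨-, h⟩ | ⟨-, h⟩
  · exact le_max_of_le_right h
  · exact le_max_of_le_left h

theorem apply_add_mem_Icc (hτ : WeakStability C τ) (ha : a ∈ C) (hb : b ∈ C)
    (hab : τ a ≤ τ b) : τ (a + b) ∈ Set.Icc (τ a) (τ b) :=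
  ⟨min_eq_left hab ▸ hτ.min_le_apply_add ha hb, max_eq_right hab ▸ hτ.apply_add_le_max ha hb⟩

end WeakStability

namespace Dominates

variable {A T T' : Type*} [AddCommGroup A] [LinearOrder T] [LinearOrder T'] {C : Set A}
  {τ : A → T} {τt : A → T'} {a b : A}

theorem lt_of_lt (hdom : Dominates C τ τt) (ha : a ∈ C) (hb : b ∈ C) (h : τt a < τt b) :
    τ a < τ b :=
  lt_of_not_ge fun hba => (hdom b a hb ha hba).not_gt h

theorem apply_add_mem_Icc (hdom : Dominates C τ τt) (hτt : WeakStability C τt) (ha : a ∈ C)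
    (hb : b ∈ C) (hab : τ a ≤ τ b) : τt (a + b) ∈ Set.Icc (τt a) (τt b) :=
  hτt.apply_add_mem_Icc ha hb (hdom a b ha hb hab)

end Dominates

section Sums

variable {A : Type*} [AddCommGroup A] {C : Set A} {κ : ℕ → A} {i n : ℕ}

theorem lowSum_zero (κ : ℕ → A) : lowSum κ 0 = κ 0 := by
  simp [lowSum]

theorem lowSum_succ (κ : ℕ → A) (i : ℕ) : lowSum κ (i + 1) = lowSum κ i + κ (i + 1) :=
  sum_range_succ κ (i + 1)

theorem highSum_eq_add (κ : ℕ → A) (h : i + 1 < n) :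
    highSum κ i n = κ (i + 1) + highSum κ (i + 1) n :=
  sum_eq_sum_Ico_succ_bot h κ

theorem highSum_of_add_two_eq (κ : ℕ → A) (h : i + 2 = n) : highSum κ i n = κ (i + 1) := by
  subst h
  simp [highSum]

theorem lowSum_add_highSum (κ : ℕ → A) (h : i < n) :
    lowSum κ i + highSum κ i n = ∑ j ∈ range n, κ j := by
  rw [lowSum, highSum, range_eq_Ico, range_eq_Ico, sum_Ico_consecutive κ (Nat.zero_le _) h]

theorem lowSum_mem (hC : ∀ a b : A, a ∈ C → b ∈ C → a + b ∈ C) (hκ : ∀ j, j < n → κ j ∈ C)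
    (h : i < n) : lowSum κ i ∈ C :=
  sum_induction_nonempty κ (· ∈ C) hC nonempty_range_add_one
    fun j hj => hκ j ((mem_range.1 hj).trans_le h)

theorem highSum_mem (hC : ∀ a b : A, a ∈ C → b ∈ C → a + b ∈ C)
    (hκ : ∀ j, j < n → κ j ∈ C) (h : i + 1 < n) : highSum κ i n ∈ C :=
  sum_induction_nonempty κ (· ∈ C) hC (nonempty_Ico.2 h) fun j hj => hκ j (mem_Ico.1 hj).2

theorem sum_range_mem (hC : ∀ a b : A, a ∈ C → b ∈ C → a + b ∈ C)
    (hκ : ∀ j, j < n → κ j ∈ C) (h : 0 < n) : ∑ j ∈ range n, κ j ∈ C :=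
  sum_induction_nonempty κ (· ∈ C) hC (nonempty_range_iff.2 h.ne')
    fun j hj => hκ j (mem_range.1 hj)

end Sums

section Coefficient

variable {A T T' : Type*} [AddCommGroup A] [LinearOrder T] [LinearOrder T'] {C : Set A}
  {τ : A → T} {τt : A → T'} {m : ℕ} {lam : ℕ → A} {i : ℕ}

theorem SCondB.tau_mem_Icc (hC : ∀ a b : A, a ∈ C → b ∈ C → a + b ∈ C)
    (hlam : ∀ j, j < m → lam j ∈ C) (hτ : WeakStability C τ) (hi : i + 1 < m)
    (hB : SCondB τt τ m lam i) :
    τ (∑ j ∈ range m, lam j) ∈ Set.Icc (τ (lowSum lam i)) (τ (highSum lam i m)) := by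
  rw [← lowSum_add_highSum lam (Nat.lt_of_succ_lt hi)]
  exact hτ.apply_add_mem_Icc (lowSum_mem hC hlam (Nat.lt_of_succ_lt hi))
    (highSum_mem hC hlam hi) hB.2

theorem SCondB.tauTilde_mem_Icc (hC : ∀ a b : A, a ∈ C → b ∈ C → a + b ∈ C)
    (hlam : ∀ j, j < m → lam j ∈ C) (hτt : WeakStability C τt) (hdom : Dominates C τ τt)
    (hi : i + 1 < m) (hB : SCondB τt τ m lam i) :
    τt (∑ j ∈ range m, lam j) ∈ Set.Icc (τt (lowSum lam i)) (τt (highSum lam i m)) := by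
  rw [← lowSum_add_highSum lam (Nat.lt_of_succ_lt hi)]
  exact hdom.apply_add_mem_Icc hτt (lowSum_mem hC hlam (Nat.lt_of_succ_lt hi))
    (highSum_mem hC hlam hi) hB.2

theorem SCondA.tauTilde_mem_Icc (hC : ∀ a b : A, a ∈ C → b ∈ C → a + b ∈ C)
    (hlam : ∀ j, j < m → lam j ∈ C) (hτt : WeakStability C τt) (hdom : Dominates C τ τt)
    (hi : i + 1 < m) (hA : SCondA τt τ m lam i) :
    τt (∑ j ∈ range m, lam j) ∈ Set.Icc (τt (highSum lam i m)) (τt (lowSum lam i)) := by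
  rw [← lowSum_add_highSum lam (Nat.lt_of_succ_lt hi), add_comm]
  exact hdom.apply_add_mem_Icc hτt (highSum_mem hC hlam hi)
    (lowSum_mem hC hlam (Nat.lt_of_succ_lt hi)) hA.2.le

theorem not_SCondA_of_SCondB_succ (hC : ∀ a b : A, a ∈ C → b ∈ C → a + b ∈ C)
    (hlam : ∀ j, j < m → lam j ∈ C) (hτ : WeakStability C τ) (hi : i + 2 < m)
    (hB : SCondB τt τ m lam (i + 1)) (hlt : τ (∑ j ∈ range m, lam j) < τ (lam (i + 1))) :
    ¬ SCondA τt τ m lam i := by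
  obtain ⟨hlow, hhigh⟩ := hB.tau_mem_Icc hC hlam hτ hi
  have hmem : lowSum lam i ∈ C := lowSum_mem hC hlam (by omega)
  have hlow' : τ (lowSum lam i) ≤ τ (∑ j ∈ range m, lam j) := by
    have h := hτ.min_le_apply_add hmem (hlam (i + 1) (by omega))
    rw [← lowSum_succ] at h
    exact (min_le_iff.1 (h.trans hlow)).resolve_right hlt.not_ge
  have hhigh' : τ (∑ j ∈ range m, lam j) ≤ τ (highSum lam i m) := by
    rw [highSum_eq_add lam (by omega)]
    exact (le_min hlt.le hhigh).trans
      (hτ.min_le_apply_add (hlam (i + 1) (by omega)) (highSum_mem hC hlam hi))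
  exact fun hA => (hA.2.trans_le hlow').not_ge hhigh'

theorem not_SCondA_succ_of_SCondB (hC : ∀ a b : A, a ∈ C → b ∈ C → a + b ∈ C)
    (hlam : ∀ j, j < m → lam j ∈ C) (hτ : WeakStability C τ) (hi : i + 2 < m)
    (hB : SCondB τt τ m lam i) (hlt : τ (lam (i + 1)) < τ (∑ j ∈ range m, lam j)) :
    ¬ SCondA τt τ m lam (i + 1) := by
  obtain ⟨hlow, hhigh⟩ := hB.tau_mem_Icc hC hlam hτ (by omega)
  have hmem : lowSum lam i ∈ C := lowSum_mem hC hlam (by omega)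
  have hlow' : τ (lowSum lam (i + 1)) ≤ τ (∑ j ∈ range m, lam j) := by
    rw [lowSum_succ]
    exact (hτ.apply_add_le_max hmem (hlam (i + 1) (by omega))).trans (max_le hlow hlt.le)
  have hhigh' : τ (∑ j ∈ range m, lam j) ≤ τ (highSum lam (i + 1) m) := by
    rw [highSum_eq_add lam (by omega)] at hhigh
    have h := hhigh.trans (hτ.apply_add_le_max (hlam (i + 1) (by omega)) (highSum_mem hC hlam hi))
    exact (le_max_iff.1 h).resolve_left hlt.not_ge
  exact fun hA => (hA.2.trans_le hlow').not_ge hhigh'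

theorem forall_SCondA_or_SCondB_iff (hC : ∀ a b : A, a ∈ C → b ∈ C → a + b ∈ C)
    (hlam : ∀ j, j < m → lam j ∈ C) (hτ : WeakStability C τ) (hτt : WeakStability C τt)
    (hdom : Dominates C τ τt) :
    (∀ j ∈ range (m - 1), SCondA τt τ m lam j ∨ SCondB τt τ m lam j) ↔
      ∀ j ∈ range (m - 1), SCondA τt τ m lam j := by
  simp only [mem_range, Nat.lt_sub_iff_add_lt]
  refine ⟨fun hall i hi => ?_, fun hA j hj => Or.inl (hA j hj)⟩
  have hσ := sum_range_mem hC hlam (by omega)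
  have descend : ∀ k, k + 1 < m → SCondB τt τ m lam k →
      τt (lam k) ≤ τt (∑ j ∈ range m, lam j) := by
    intro k hk hB
    induction k with
    | zero => simpa only [lowSum_zero] using (hB.tauTilde_mem_Icc hC hlam hτt hdom hk).1
    | succ k ih =>
      refine le_of_not_gt fun hlt => ?_
      have hB' : SCondB τt τ m lam k := (hall k (by omega)).resolve_left <|
        not_SCondA_of_SCondB_succ hC hlam hτ hk hB (hdom.lt_of_lt hσ (hlam _ (by omega)) hlt)
      exact (ih (by omega) hB').not_gt (hlt.trans hB'.1)
  have ascend : ∀ k, k + 1 < m → SCondB τt τ m lam k →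
      τt (∑ j ∈ range m, lam j) ≤ τt (lam (k + 1)) := by
    intro k hk hB
    induction hd : m - (k + 2) generalizing k with
    | zero =>
      simpa only [highSum_of_add_two_eq lam (by omega : k + 2 = m)] using
        (hB.tauTilde_mem_Icc hC hlam hτt hdom hk).2
    | succ d ih =>
      refine le_of_not_gt fun hlt => ?_
      have hB' : SCondB τt τ m lam (k + 1) := (hall (k + 1) (by omega)).resolve_left <|
        not_SCondA_succ_of_SCondB hC hlam hτ (by omega) hB
          (hdom.lt_of_lt (hlam _ hk) hσ hlt)
      exact (ih (k + 1) (by omega) hB' (by omega)).not_gt (hB'.1.trans hlt)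
  refine (hall i hi).resolve_right fun hB => ?_
  exact ((ascend i hi hB).trans_lt hB.1).not_ge (descend i hi hB)

theorem tauTilde_eq_of_forall_SCondA (hC : ∀ a b : A, a ∈ C → b ∈ C → a + b ∈ C)
    (hlam : ∀ j, j < m → lam j ∈ C) (hτt : WeakStability C τt) (hdom : Dominates C τ τt)
    (hA : ∀ j, j + 1 < m → SCondA τt τ m lam j) (hi : i < m) :
    τt (lam i) = τt (∑ j ∈ range m, lam j) := by
  rcases Nat.lt_or_ge m 2 with hm | hm
  · obtain rfl : m = 1 := by omega
    obtain rfl : i = 0 := by omega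
    simp
  have hmono : MonotoneOn (τt ∘ lam) (Set.Iio m) :=
    monotoneOn_of_le_succ Set.ordConnected_Iio fun j _ _ hj =>
      (hA j (by simpa [Order.succ_eq_add_one] using hj)).1
  have hfirst : τt (∑ j ∈ range m, lam j) ≤ τt (lam 0) := by
    simpa only [lowSum_zero] using
      ((hA 0 (by omega)).tauTilde_mem_Icc hC hlam hτt hdom (by omega)).2
  have hlast : τt (lam (m - 1)) ≤ τt (∑ j ∈ range m, lam j) := by
    have h := ((hA (m - 2) (by omega)).tauTilde_mem_Icc hC hlam hτt hdom (by omega)).1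
    rwa [highSum_of_add_two_eq lam (by omega), show m - 2 + 1 = m - 1 by omega] at h
  exact le_antisymm ((hmono hi (show m - 1 < m by omega) (by omega)).trans hlast)
    (hfirst.trans (hmono (show 0 < m by omega) hi (Nat.zero_le i)))

theorem forall_SCondA_iff (hC : ∀ a b : A, a ∈ C → b ∈ C → a + b ∈ C)
    (hlam : ∀ j, j < m → lam j ∈ C) (hτt : WeakStability C τt) (hdom : Dominates C τ τt) :
    (∀ j ∈ range (m - 1), SCondA τt τ m lam j) ↔
      (∀ j, j + 1 < m → τ (highSum lam j m) < τ (lowSum lam j)) ∧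
        ∀ j, j < m → τt (lam j) = τt (∑ k ∈ range m, lam k) := by
  simp only [mem_range, Nat.lt_sub_iff_add_lt]
  refine ⟨fun hA => ⟨fun j hj => (hA j hj).2,
    fun j hj => tauTilde_eq_of_forall_SCondA hC hlam hτt hdom hA hj⟩, fun ⟨hlt, heq⟩ j hj => ?_⟩
  exact ⟨(heq j (by omega)).trans (heq (j + 1) hj).symm |>.le, hlt j hj⟩

end Coefficient

theorem stmt10_general {A T T' : Type*} [AddCommGroup A] [LinearOrder T] [LinearOrder T']
    (C : Set A) (hC : ∀ a b : A, a ∈ C → b ∈ C → a + b ∈ C)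
    (τ : A → T) (τt : A → T') (hτ : WeakStability C τ) (hτt : WeakStability C τt)
    (hdom : ∀ α β : A, α ∈ C → β ∈ C → τ α ≤ τ β → τt α ≤ τt β)
    (m : ℕ) (lam : ℕ → A) (hlam : ∀ i, i < m → lam i ∈ C) :
    Scoeff τt τ m lam =
      if (∀ i, i + 1 < m → τ (highSum lam i m) < τ (lowSum lam i)) ∧
         (∀ i, i < m → τt (lam i) = τt (∑ j ∈ Finset.range m, lam j)) then
        (-1) ^ (m - 1)
      else 0 := by
  have hAB := forall_SCondA_or_SCondB_iff hC hlam hτ hτt hdom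
  have hA := forall_SCondA_iff hC hlam hτt hdom
  by_cases h : ∀ i ∈ range (m - 1), SCondA τt τ m lam i
  · rw [Scoeff, if_pos (hAB.2 h), if_pos (hA.1 h), filter_true_of_mem h, card_range]
  · rw [Scoeff, if_neg (mt hAB.1 h), if_neg (mt hA.2 h)]

theorem stmt10 {A T T' : Type*} [AddCommGroup A] [LinearOrder T] [LinearOrder T']
    (C : Set A) (hC : ∀ a b : A, a ∈ C → b ∈ C → a + b ∈ C) (h0 : (0 : A) ∉ C)
    (τ : A → T) (τt : A → T') (hτ : WeakStability C τ) (hτt : WeakStability C τt)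
    (hdom : ∀ α β : A, α ∈ C → β ∈ C → τ α ≤ τ β → τt α ≤ τt β)
    (m : ℕ) (hm : 1 ≤ m) (lam : ℕ → A) (hlam : ∀ i, i < m → lam i ∈ C) :
    Scoeff τt τ m lam =
      if (∀ i, i + 1 < m → τ (highSum lam i m) < τ (lowSum lam i)) ∧
         (∀ i, i < m → τt (lam i) = τt (∑ j ∈ Finset.range m, lam j)) then
        (-1) ^ (m - 1)
      else 0 :=
  stmt10_general C hC τ τt hτ hτt hdom m lam hlam
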